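/- arXiv:1405.3016 — 4 statements merged into one kernel-verified Lean document; each statement's English description precedes it below -/
import Mathlib

section
/- Let α > n ≥ 1 and C₀ > 0. Then the integral ∫_{ℚₚⁿ} ‖ξ‖ₚ^{α-n} exp(-C₀ t ‖ξ‖ₚ^{α-n}) dⁿξ is finite for every t > 0 and is bounded above by C₃ t^{-α/(α-n)} for a constant C₃ > 0 independent of t. -/
/-!
The norm of `ℚ_[p]ⁿ` takes the values `pᵏ`, and the ball of radius `pᵏ` has volume `p^(nk)`:
the unit ball is the disjoint union of `pⁿ` translates of `p • (unit ball)`, so the Haar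
character of `p` is `p⁻ⁿ`. Bounding the integrand on each shell `pᵏ < ‖ξ‖ ≤ p^(k+1)` bounds the
integral by `p^α` times the series `∑ₖ p^(kα) exp(-τ p^(kβ))` over `k ∈ ℤ`, where `β = α - n` and
`τ = C₀ t`. With `p^(m-1) < τ^(-1/β) ≤ p^m`, shifting the summation index by `m` bounds this
series by `p^(mα) ∑ₖ p^(kα) exp(-p^(kβ))`, and `p^(mα) ≤ p^α τ^(-α/β)`.
-/

open MeasureTheory Metric Function
open scoped ENNReal NNReal Pointwise Nat

namespace Padic

variable {p : ℕ} [Fact p.Prime]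

lemma exists_norm_sub_natCast_le_inv {x : ℚ_[p]} (hx : ‖x‖ ≤ 1) :
    ∃ v : Fin p, ‖x - (v : ℕ)‖ ≤ (p : ℝ)⁻¹ := by
  let z : ℤ_[p] := ⟨x, hx⟩
  obtain ⟨v, hvp, hv⟩ := PadicInt.exists_mem_range z
  refine ⟨⟨v, hvp⟩, ?_⟩
  have hlt : ‖x - v‖ < (p : ℝ) ^ ((-1 : ℤ) + 1) := by
    have h := PadicInt.mem_nonunits.mp hv
    rw [PadicInt.norm_def, PadicInt.coe_sub, PadicInt.coe_natCast] at h
    rwa [neg_add_cancel, zpow_zero]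
  simpa using (norm_le_pow_iff_norm_lt_pow_add_one _ (-1)).mpr hlt

lemma fin_eq_of_norm_natCast_sub_lt_one {v w : Fin p} (h : ‖((v : ℕ) : ℚ_[p]) - (w : ℕ)‖ < 1) :
    v = w := by
  have hdvd : (p : ℤ) ∣ (v : ℤ) - (w : ℤ) := norm_intCast_lt_one_iff.mp (by simpa using h)
  exact Fin.ext (Nat.ModEq.eq_of_lt_of_lt ((Nat.modEq_iff_dvd.mpr hdvd).symm) v.2 w.2)

variable {n : ℕ}

lemma closedBall_one_eq_iUnion :
    closedBall (0 : Fin n → ℚ_[p]) 1 =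
      ⋃ v : Fin n → Fin p, closedBall (fun i => ((v i : ℕ) : ℚ_[p])) (p : ℝ)⁻¹ := by
  have hp : (p : ℝ)⁻¹ ≤ 1 := inv_le_one_of_one_le₀ (by exact_mod_cast (Fact.out : p.Prime).one_le)
  ext x
  simp only [mem_closedBall, Set.mem_iUnion, dist_eq_norm, sub_zero]
  constructor
  · intro hx
    choose v hv using fun i => exists_norm_sub_natCast_le_inv ((norm_le_pi_norm x i).trans hx)
    exact ⟨v, (pi_norm_le_iff_of_nonneg (by positivity)).mpr hv⟩
  · rintro ⟨v, hv⟩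
    have hc : ‖fun i => ((v i : ℕ) : ℚ_[p])‖ ≤ 1 :=
      (pi_norm_le_iff_of_nonneg zero_le_one).mpr fun i => by
        simpa using norm_int_le_one (p := p) (v i : ℕ)
    simpa using (IsUltrametricDist.norm_add_le_max _ _).trans (max_le (hv.trans hp) hc)

lemma pairwise_disjoint_closedBall_natCast :
    Pairwise (Disjoint on fun v : Fin n → Fin p =>
      closedBall (fun i => ((v i : ℕ) : ℚ_[p])) (p : ℝ)⁻¹) := by
  intro v w hvw
  refine (IsUltrametricDist.closedBall_eq_or_disjoint _ _ _).resolve_left fun heq => hvw ?_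
  have hw : (fun i => ((w i : ℕ) : ℚ_[p])) ∈ closedBall (fun i => ((v i : ℕ) : ℚ_[p])) (p : ℝ)⁻¹ :=
    heq ▸ mem_closedBall_self (by positivity)
  have hp : (p : ℝ)⁻¹ < 1 := inv_lt_one_of_one_lt₀ (by exact_mod_cast (Fact.out : p.Prime).one_lt)
  funext i
  refine (fin_eq_of_norm_natCast_sub_lt_one ?_).symm
  exact ((norm_le_pi_norm _ i).trans (mem_closedBall_iff_norm.mp hw)).trans_lt hp

variable [MeasurableSpace (Fin n → ℚ_[p])] [BorelSpace (Fin n → ℚ_[p])]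
  (μ : Measure (Fin n → ℚ_[p])) [μ.IsAddHaarMeasure]

lemma measure_closedBall_one :
    μ (closedBall 0 1) = p ^ n * μ (closedBall 0 (p : ℝ)⁻¹) := by
  rw [closedBall_one_eq_iUnion,
    measure_iUnion pairwise_disjoint_closedBall_natCast fun _ => measurableSet_closedBall]
  simp [Measure.addHaar_closedBall_center]

lemma measure_closedBall_zpow (k : ℤ) :
    μ (closedBall 0 ((p : ℝ) ^ k)) = ENNReal.ofReal (((p : ℝ) ^ k) ^ n) * μ (closedBall 0 1) := by
  have hp : (p : ℚ_[p]) ≠ 0 := by exact_mod_cast (Fact.out : p.Prime).ne_zero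
  set u : ℚ_[p]ˣ := Units.mk0 (p : ℚ_[p]) hp
  have hsmul (g : ℚ_[p]ˣ) : g • closedBall (0 : Fin n → ℚ_[p]) 1 = closedBall 0 ‖(g : ℚ_[p])‖ := by
    have := smul_closedBall (g : ℚ_[p]) (0 : Fin n → ℚ_[p]) zero_le_one
    rwa [smul_zero, mul_one] at this
  have hχ : distribHaarChar (Fin n → ℚ_[p]) u = ((p : ℝ≥0) ^ n)⁻¹ := by
    refine distribHaarChar_eq_of_measure_smul_eq_mul (measure_closedBall_pos μ 0 one_pos).ne'
      measure_closedBall_lt_top.ne ?_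
    have hpn : ((p : ℝ≥0) ^ n) ≠ 0 := pow_ne_zero _ (by exact_mod_cast (Fact.out : p.Prime).ne_zero)
    rw [hsmul, Units.val_mk0, norm_p, measure_closedBall_one μ, ← mul_assoc, ENNReal.coe_inv hpn,
      ENNReal.coe_pow, ENNReal.coe_natCast, ENNReal.inv_mul_cancel (by simpa using hpn) (by simp),
      one_mul]
  have hball : closedBall (0 : Fin n → ℚ_[p]) ((p : ℝ) ^ k) = (u ^ (-k)) • closedBall 0 1 := by
    rw [hsmul, Units.val_zpow_eq_zpow_val, Units.val_mk0, norm_p_zpow, neg_neg]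
  rw [hball, ← distribHaarChar_mul, map_zpow, hχ, inv_zpow', neg_neg, ← ENNReal.ofReal_coe_nnreal,
    NNReal.coe_zpow, NNReal.coe_pow, NNReal.coe_natCast, ← zpow_natCast, ← zpow_natCast (_ ^ k),
    ← zpow_mul, ← zpow_mul, mul_comm (n : ℤ)]

end Padic

theorem integrable_and_integral_le_of_lintegral_ofReal_le {X : Type*} [MeasurableSpace X]
    {μ : Measure X} {f : X → ℝ} (hf : AEStronglyMeasurable f μ) (h0 : 0 ≤ᵐ[μ] f) {c : ℝ}
    (hc : 0 ≤ c) (h : ∫⁻ x, ENNReal.ofReal (f x) ∂μ ≤ ENNReal.ofReal c) :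
    Integrable f μ ∧ ∫ x, f x ∂μ ≤ c :=
  ⟨⟨hf, (hasFiniteIntegral_iff_ofReal h0).mpr (h.trans_lt ENNReal.ofReal_lt_top)⟩,
    (integral_eq_lintegral_of_nonneg_ae h0 hf).trans_le (ENNReal.toReal_le_of_le_ofReal hc h)⟩

theorem lintegral_le_tsum_mul_measure_closedBall_zpow {E : Type*} [NormedAddCommGroup E]
    [MeasurableSpace E] [OpensMeasurableSpace E] (μ : Measure E) {b : ℝ} (hb : 1 < b)
    {f : E → ℝ≥0∞} (hf : f 0 = 0) {a : ℤ → ℝ≥0∞}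
    (ha : ∀ (k : ℤ) (x : E), b ^ k < ‖x‖ → ‖x‖ ≤ b ^ (k + 1) → f x ≤ a k) :
    ∫⁻ x, f x ∂μ ≤ ∑' k, a k * μ (closedBall 0 (b ^ (k + 1))) := by
  have hf_le (x : E) :
      f x ≤ ∑' k, (closedBall (0 : E) (b ^ (k + 1))).indicator (fun _ => a k) x := by
    rcases eq_or_ne x 0 with rfl | hx
    · simp [hf]
    obtain ⟨k, hk, hk'⟩ := exists_mem_Ioc_zpow (norm_pos_iff.mpr hx) hb
    calc f x ≤ a k := ha k x hk hk'
      _ = (closedBall (0 : E) (b ^ (k + 1))).indicator (fun _ => a k) x := by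
        rw [Set.indicator_of_mem (mem_closedBall_zero_iff.mpr hk')]
      _ ≤ _ := ENNReal.le_tsum k
  calc ∫⁻ x, f x ∂μ
      ≤ ∫⁻ x, ∑' k, (closedBall (0 : E) (b ^ (k + 1))).indicator (fun _ => a k) x ∂μ :=
        lintegral_mono hf_le
    _ = _ := by
      rw [lintegral_tsum fun k =>
        (measurable_const.indicator measurableSet_closedBall).aemeasurable]
      simp_rw [lintegral_indicator_const measurableSet_closedBall]

namespace Real

lemma rpow_mul_exp_neg_mul_rpow_le {r s R β τ : ℝ} (hr : 0 ≤ r) (hrs : r ≤ s) (hsR : s ≤ R)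
    (hβ : 0 ≤ β) (hτ : 0 ≤ τ) : s ^ β * exp (-τ * s ^ β) ≤ R ^ β * exp (-τ * r ^ β) :=
  mul_le_mul (rpow_le_rpow (hr.trans hrs) hsR hβ)
    (exp_le_exp.mpr (mul_le_mul_of_nonpos_left (rpow_le_rpow hr hrs hβ) (neg_nonpos.mpr hτ)))
    (exp_pos _).le (rpow_nonneg (hr.trans (hrs.trans hsR)) _)

lemma exp_neg_le_factorial_div_pow (M : ℕ) {y : ℝ} (hy : 0 < y) : exp (-y) ≤ M ! / y ^ M := by
  rw [exp_neg, ← inv_div]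
  exact inv_anti₀ (by positivity) (pow_div_factorial_le_exp y hy.le M)

lemma summable_zpow_rpow_mul_exp_neg_mul {b α β τ : ℝ} (hb : 1 < b) (hα : 0 < α) (hβ : 0 < β)
    (hτ : 0 < τ) : Summable fun k : ℤ => (b ^ k) ^ α * exp (-τ * (b ^ k) ^ β) := by
  have hb0 : 0 < b := zero_lt_one.trans hb
  have hnonneg (k : ℤ) : 0 ≤ (b ^ k) ^ α * exp (-τ * (b ^ k) ^ β) := by positivity
  apply Summable.of_nat_of_neg_add_one
  · obtain ⟨M, hM⟩ : ∃ M : ℕ, α < M * β := by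
      obtain ⟨M, hM⟩ := exists_nat_gt (α / β)
      exact ⟨M, (div_lt_iff₀ hβ).mp hM⟩
    have hgeom := (summable_geometric_of_lt_one (rpow_nonneg hb0.le (α - M * β))
      (rpow_lt_one_of_one_lt_of_neg hb (by linarith))).mul_left (M ! / τ ^ M)
    refine hgeom.of_nonneg_of_le (fun k => hnonneg k) fun k => ?_
    calc (b ^ (k : ℤ)) ^ α * exp (-τ * (b ^ (k : ℤ)) ^ β)
        ≤ (b ^ (k : ℤ)) ^ α * (M ! / (τ * (b ^ (k : ℤ)) ^ β) ^ M) := by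
          rw [neg_mul]
          gcongr
          exact exp_neg_le_factorial_div_pow M (by positivity)
      _ = M ! / τ ^ M * (b ^ (α - M * β)) ^ k := by
          simp only [zpow_natCast, ← rpow_natCast, ← rpow_mul hb0.le,
            mul_rpow hτ.le (rpow_nonneg hb0.le _)]
          rw [show (α - M * β) * k = k * α - k * β * M by ring, rpow_sub hb0]
          field_simp
  · refine (summable_geometric_of_lt_one (rpow_nonneg hb0.le (-α))
      (rpow_lt_one_of_one_lt_of_neg hb (by linarith))).of_nonneg_of_le (fun k => hnonneg _)
      fun k => ?_
    have hexp : exp (-τ * (b ^ (-((k : ℤ) + 1))) ^ β) ≤ 1 :=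
      exp_le_one_iff.mpr (mul_nonpos_of_nonpos_of_nonneg (neg_nonpos.mpr hτ.le) (by positivity))
    calc (b ^ (-((k : ℤ) + 1))) ^ α * exp (-τ * (b ^ (-((k : ℤ) + 1))) ^ β)
        ≤ (b ^ (-((k : ℤ) + 1))) ^ α := mul_le_of_le_one_right (by positivity) hexp
      _ ≤ (b ^ (-α)) ^ k := by
          rw [← rpow_intCast, ← rpow_mul hb0.le, ← rpow_natCast, ← rpow_mul hb0.le]
          exact rpow_le_rpow_of_exponent_le hb.le (by push_cast; nlinarith)

theorem exists_tsum_ofReal_zpow_rpow_mul_exp_neg_mul_le {b α β : ℝ} (hb : 1 < b) (hα : 0 < α)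
    (hβ : 0 < β) : ∃ C > 0, ∀ τ > 0,
      ∑' k : ℤ, ENNReal.ofReal ((b ^ k) ^ α * exp (-τ * (b ^ k) ^ β)) ≤
        ENNReal.ofReal (C * τ ^ (-α / β)) := by
  have hb0 : 0 < b := zero_lt_one.trans hb
  set G : ℤ → ℝ := fun k => (b ^ k) ^ α * exp (-1 * (b ^ k) ^ β)
  have hG : Summable G := summable_zpow_rpow_mul_exp_neg_mul hb hα hβ one_pos
  have hG0 (k : ℤ) : 0 ≤ G k := by positivity
  refine ⟨b ^ α * ∑' k, G k, mul_pos (rpow_pos_of_pos hb0 _) (hG.tsum_pos hG0 0 (by positivity)),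
    fun τ hτ => ?_⟩
  -- the scale `b ^ (m + 1)` of `τ`: shifting `k` by `m + 1` replaces `τ` by `τ b^((m+1)β) ≥ 1`
  obtain ⟨m, hm, hm'⟩ := exists_mem_Ioc_zpow (rpow_pos_of_pos hτ (-1 / β)) hb
  have hscale : 1 ≤ τ * (b ^ (m + 1)) ^ β := by
    calc 1 = τ * (τ ^ (-1 / β)) ^ β := by
          rw [← rpow_mul hτ.le, div_mul_cancel₀ _ hβ.ne', rpow_neg_one, mul_inv_cancel₀ hτ.ne']
      _ ≤ _ := by gcongr
  have hshift (k : ℤ) : (b ^ (k + (m + 1))) ^ α * exp (-τ * (b ^ (k + (m + 1))) ^ β) ≤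
      (b ^ (m + 1)) ^ α * G k := by
    rw [zpow_add₀ hb0.ne', mul_rpow (by positivity) (by positivity),
      mul_rpow (by positivity) (by positivity), mul_comm ((b ^ k) ^ α), mul_assoc]
    simp only [G]
    gcongr _ * (_ * exp ?_)
    nlinarith [rpow_nonneg (zpow_nonneg hb0.le k) β]
  have hpow : (b ^ (m + 1)) ^ α ≤ b ^ α * τ ^ (-α / β) := by
    rw [zpow_add_one₀ hb0.ne', mul_rpow (by positivity) hb0.le, mul_comm]
    gcongr
    calc (b ^ m) ^ α ≤ (τ ^ (-1 / β)) ^ α := by gcongr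
      _ = τ ^ (-α / β) := by rw [← rpow_mul hτ.le]; ring_nf
  calc ∑' k : ℤ, ENNReal.ofReal ((b ^ k) ^ α * exp (-τ * (b ^ k) ^ β))
      = ∑' k : ℤ, ENNReal.ofReal ((b ^ (k + (m + 1))) ^ α * exp (-τ * (b ^ (k + (m + 1))) ^ β)) :=
        ((Equiv.addRight (m + 1)).tsum_eq
          (fun k => ENNReal.ofReal ((b ^ k) ^ α * exp (-τ * (b ^ k) ^ β)))).symm
    _ ≤ ∑' k : ℤ, ENNReal.ofReal ((b ^ (m + 1)) ^ α * G k) :=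
        ENNReal.tsum_le_tsum fun k => ENNReal.ofReal_le_ofReal (hshift k)
    _ = ENNReal.ofReal ((b ^ (m + 1)) ^ α * ∑' k, G k) := by
        rw [← tsum_mul_left, ENNReal.ofReal_tsum_of_nonneg (fun k => by positivity) (hG.mul_left _)]
    _ ≤ ENNReal.ofReal (b ^ α * (∑' k, G k) * τ ^ (-α / β)) := by
        refine ENNReal.ofReal_le_ofReal ?_
        calc _ ≤ b ^ α * τ ^ (-α / β) * ∑' k, G k := by gcongr
          _ = _ := by ring

end Real

theorem stmt2_general {p : ℕ} [Fact p.Prime] {n : ℕ}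
    [MeasurableSpace (Fin n → ℚ_[p])] [BorelSpace (Fin n → ℚ_[p])]
    (μ : Measure (Fin n → ℚ_[p])) [μ.IsAddHaarMeasure]
    (hμ : μ (Metric.closedBall 0 1) = 1)
    (α : ℝ) (hα : (n : ℝ) < α) (C₀ : ℝ) (hC₀ : 0 < C₀) :
    ∃ C₃ > (0 : ℝ), ∀ t : ℝ, 0 < t →
      Integrable (fun ξ : Fin n → ℚ_[p] =>
        ‖ξ‖ ^ (α - n) * Real.exp (-C₀ * t * ‖ξ‖ ^ (α - n))) μ ∧
      (∫ ξ : Fin n → ℚ_[p], ‖ξ‖ ^ (α - n) * Real.exp (-C₀ * t * ‖ξ‖ ^ (α - n)) ∂μ) ≤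
        C₃ * t ^ (-α / (α - n)) := by
  have hβ : 0 < α - n := sub_pos.mpr hα
  have hp : (1 : ℝ) < p := by exact_mod_cast (Fact.out : p.Prime).one_lt
  obtain ⟨C, hC, hsum⟩ := Real.exists_tsum_ofReal_zpow_rpow_mul_exp_neg_mul_le hp
    ((Nat.cast_nonneg n).trans_lt hα) hβ
  refine ⟨p ^ α * C * C₀ ^ (-α / (α - n)), by positivity, fun t ht => ?_⟩
  refine integrable_and_integral_le_of_lintegral_ofReal_le (by fun_prop)
    (ae_of_all _ fun ξ => by positivity) (by positivity) ?_
  calc ∫⁻ ξ, ENNReal.ofReal (‖ξ‖ ^ (α - n) * Real.exp (-C₀ * t * ‖ξ‖ ^ (α - n))) ∂μ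
      ≤ ∑' k : ℤ, ENNReal.ofReal (((p : ℝ) ^ (k + 1)) ^ (α - n) *
          Real.exp (-(C₀ * t) * ((p : ℝ) ^ k) ^ (α - n))) *
          μ (closedBall 0 ((p : ℝ) ^ (k + 1))) := by
        refine lintegral_le_tsum_mul_measure_closedBall_zpow μ hp (by simp [Real.zero_rpow hβ.ne'])
          fun k ξ hk hk' => ENNReal.ofReal_le_ofReal ?_
        rw [neg_mul C₀ t]
        exact Real.rpow_mul_exp_neg_mul_rpow_le (by positivity) hk.le hk' hβ.le (by positivity)
    _ = ∑' k : ℤ, ENNReal.ofReal (p ^ α) * ENNReal.ofReal (((p : ℝ) ^ k) ^ α *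
          Real.exp (-(C₀ * t) * ((p : ℝ) ^ k) ^ (α - n))) := by
        refine tsum_congr fun k => ?_
        rw [Padic.measure_closedBall_zpow, hμ, mul_one, ← ENNReal.ofReal_mul (by positivity),
          ← ENNReal.ofReal_mul (by positivity)]
        congr 1
        have hx : (p : ℝ) ^ (k + 1) ≠ 0 := by positivity
        rw [Real.rpow_sub_natCast hx, zpow_add_one₀ (by positivity),
          Real.mul_rpow (by positivity) (by positivity)]
        field_simp
    _ ≤ ENNReal.ofReal (p ^ α) * ENNReal.ofReal (C * (C₀ * t) ^ (-α / (α - n))) := by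
        rw [ENNReal.tsum_mul_left]
        gcongr
        exact hsum _ (by positivity)
    _ = ENNReal.ofReal (p ^ α * C * C₀ ^ (-α / (α - n)) * t ^ (-α / (α - n))) := by
        rw [← ENNReal.ofReal_mul (by positivity), Real.mul_rpow hC₀.le ht.le]
        congr 1
        ring

/-- the integral `∫ ‖ξ‖^(α−n) exp(−C₀ t ‖ξ‖^(α−n)) dξ` is finite and
is `O(t^(−α/(α−n)))`. -/
theorem stmt2 {p : ℕ} [Fact p.Prime] {n : ℕ} (hn : 1 ≤ n)
    [MeasurableSpace (Fin n → ℚ_[p])] [BorelSpace (Fin n → ℚ_[p])]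
    (μ : Measure (Fin n → ℚ_[p])) [μ.IsAddHaarMeasure]
    (hμ : μ (Metric.closedBall 0 1) = 1)
    (α : ℝ) (hα : (n : ℝ) < α) (C₀ : ℝ) (hC₀ : 0 < C₀) :
    ∃ C₃ > (0 : ℝ), ∀ t : ℝ, 0 < t →
      Integrable (fun ξ : Fin n → ℚ_[p] =>
        ‖ξ‖ ^ (α - n) * Real.exp (-C₀ * t * ‖ξ‖ ^ (α - n))) μ ∧
      (∫ ξ : Fin n → ℚ_[p], ‖ξ‖ ^ (α - n) * Real.exp (-C₀ * t * ‖ξ‖ ^ (α - n)) ∂μ) ≤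
        C₃ * t ^ (-α / (α - n)) :=
  stmt2_general μ hμ α hα C₀ hC₀
end

section
/- Let n < α, 0 < v < 1, and set α_{N+1} := n + (α − n)(1 − v), so α_{N+1} < α. Let a₀ : ℚₚⁿ × [0,T] → ℝ be bounded, locally constant in x with parameter l (uniformly in t), and Hölder continuous in t with exponent v uniformly in x: |a₀(x,t) − a₀(x,τ)| ≤ C₁|t−τ|^v. Then there is a constant C' > 0 such that for all x, ξ ∈ ℚₚⁿ and 0 ≤ τ < t ≤ T: |a₀(x,t) − a₀(ξ,τ)| · ((t−τ)^{1/(α−n)} + ‖x−ξ‖ₚ)^{−α} ≤ C' ((t−τ)^{1/(α−n)} + ‖x−ξ‖ₚ)^{−α_{N+1}}. -/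
/-- Claim A in the proof of the main theorem — the Hölder/local-constancy
estimate for the leading coefficient `a₀`. -/
theorem stmt9 {p : ℕ} [Fact p.Prime] {n : ℕ}
    (α v T : ℝ) (hα : (n : ℝ) < α) (hv0 : 0 < v) (hv1 : v < 1) (hT : 0 < T)
    (aN1 : ℝ) (haN1 : aN1 = n + (α - n) * (1 - v))
    (a₀ : (Fin n → ℚ_[p]) → ℝ → ℝ) (l : ℤ)
    (C₀ : ℝ) (hbdd : ∀ (x : Fin n → ℚ_[p]) (t : ℝ), 0 ≤ t → t ≤ T → |a₀ x t| ≤ C₀)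
    (hloc : ∀ (x x' : Fin n → ℚ_[p]) (t : ℝ), 0 ≤ t → t ≤ T →
      ‖x'‖ ≤ (p : ℝ) ^ l → a₀ (x + x') t = a₀ x t)
    (C₁ : ℝ) (hHolder : ∀ (x : Fin n → ℚ_[p]) (t τ : ℝ), 0 ≤ τ → τ ≤ T → 0 ≤ t → t ≤ T →
      |a₀ x t - a₀ x τ| ≤ C₁ * |t - τ| ^ v) :
    ∃ C' > (0 : ℝ), ∀ (x ξ : Fin n → ℚ_[p]) (t τ : ℝ), 0 ≤ τ → τ < t → t ≤ T →
      |a₀ x t - a₀ ξ τ| * ((t - τ) ^ ((1 : ℝ) / (α - n)) + ‖x - ξ‖) ^ (-α) ≤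
        C' * ((t - τ) ^ ((1 : ℝ) / (α - n)) + ‖x - ξ‖) ^ (-aN1) := by
  have hn : (0:ℝ) < α - n := by linarith
  have hp : (0:ℝ) < (p:ℝ)^l := by
    have : (0:ℝ) < (p:ℝ) := by exact_mod_cast (Fact.out : p.Prime).pos
    positivity
  set M : ℝ := ((p:ℝ)^l) ^ ((α - n) * v) with hM
  have hMpos : 0 < M := Real.rpow_pos_of_pos hp _
  have hC0 : 0 ≤ C₀ := le_trans (abs_nonneg _) (hbdd 0 0 le_rfl hT.le)
  have hC'pos : (0:ℝ) < max C₁ 0 + 2*C₀/M + 1 := by positivity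
  refine ⟨max C₁ 0 + 2*C₀/M + 1, hC'pos, ?_⟩
  intro x ξ t τ hτ0 hτt htT
  have ht0 : 0 ≤ t := le_trans hτ0 hτt.le
  have hτT : τ ≤ T := le_trans hτt.le htT
  have hdt : 0 < t - τ := by linarith
  set s : ℝ := (t - τ) ^ ((1:ℝ)/(α-n)) + ‖x - ξ‖ with hsdef
  have hrpos : 0 < (t - τ) ^ ((1:ℝ)/(α-n)) := Real.rpow_pos_of_pos hdt _
  have hnn : (0:ℝ) ≤ ‖x - ξ‖ := norm_nonneg _
  have hs0 : 0 < s := by positivity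
  have key : |a₀ x t - a₀ ξ τ| ≤ (max C₁ 0 + 2*C₀/M + 1) * s ^ ((α - n) * v) := by
    have hse : 0 < s ^ ((α - n) * v) := Real.rpow_pos_of_pos hs0 _
    by_cases hcase : ‖x - ξ‖ ≤ (p:ℝ)^l
    · have heq : a₀ x t = a₀ ξ t := by
        have := hloc ξ (x - ξ) t ht0 htT hcase
        simpa using this
      rw [heq]
      have h1 : |a₀ ξ t - a₀ ξ τ| ≤ C₁ * |t - τ| ^ v := hHolder ξ t τ hτ0 hτT ht0 htT
      have h2 : (t - τ) ≤ s ^ (α - n) := by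
        have hle : (t - τ)^((1:ℝ)/(α-n)) ≤ s := by
          rw [hsdef]; linarith
        calc t - τ = ((t - τ)^((1:ℝ)/(α-n)))^(α-n) := by
              rw [← Real.rpow_mul hdt.le, one_div_mul_cancel hn.ne', Real.rpow_one]
          _ ≤ s ^ (α - n) := Real.rpow_le_rpow (Real.rpow_nonneg hdt.le _) hle hn.le
      have h3 : (t - τ) ^ v ≤ s ^ ((α - n) * v) := by
        rw [Real.rpow_mul hs0.le]
        exact Real.rpow_le_rpow hdt.le h2 hv0.le
      have habs : |t - τ| = t - τ := abs_of_pos hdt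
      calc |a₀ ξ t - a₀ ξ τ| ≤ C₁ * (t - τ) ^ v := by rwa [habs] at h1
        _ ≤ max C₁ 0 * s ^ ((α - n) * v) := by
            apply mul_le_mul (le_max_left _ _) h3 (Real.rpow_nonneg hdt.le _)
              (le_max_right _ _)
        _ ≤ (max C₁ 0 + 2*C₀/M + 1) * s ^ ((α - n) * v) := by
            apply mul_le_mul_of_nonneg_right _ hse.le
            have : 0 ≤ 2*C₀/M := by positivity
            linarith
    · push_neg at hcase
      have hsM : M ≤ s ^ ((α - n) * v) := by
        apply Real.rpow_le_rpow hp.le _ (by positivity)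
        rw [hsdef]; linarith
      have hb : |a₀ x t - a₀ ξ τ| ≤ 2 * C₀ := by
        calc |a₀ x t - a₀ ξ τ| ≤ |a₀ x t| + |a₀ ξ τ| := abs_sub _ _
          _ ≤ C₀ + C₀ := add_le_add (hbdd x t ht0 htT) (hbdd ξ τ hτ0 hτT)
          _ = 2 * C₀ := by ring
      calc |a₀ x t - a₀ ξ τ| ≤ 2 * C₀ := hb
        _ = (2*C₀/M) * M := by field_simp
        _ ≤ (2*C₀/M) * s ^ ((α - n) * v) := by
            apply mul_le_mul_of_nonneg_left hsM (by positivity)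
        _ ≤ (max C₁ 0 + 2*C₀/M + 1) * s ^ ((α - n) * v) := by
            apply mul_le_mul_of_nonneg_right _ hse.le
            have : 0 ≤ max C₁ 0 := le_max_right _ _
            linarith
  calc |a₀ x t - a₀ ξ τ| * s ^ (-α)
      ≤ ((max C₁ 0 + 2*C₀/M + 1) * s ^ ((α - n) * v)) * s ^ (-α) := by
        apply mul_le_mul_of_nonneg_right key (Real.rpow_nonneg hs0.le _)
    _ = (max C₁ 0 + 2*C₀/M + 1) * s ^ (-aN1) := by
        rw [mul_assoc, ← Real.rpow_add hs0]
        congr 1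
        congr 1
        rw [haN1]; ring
end

section
/- Let T > 0, let K : ℚₚⁿ × (0,T] → ℝ be nonnegative with ∫_{ℚₚⁿ} K(x,t) dⁿx = 1 for each t, and suppose K(x,t) ≤ C t (t^{1/(α−n)} + ‖x‖ₚ)^{−α} with α > n + λ, λ ≥ 0. Let φ : ℚₚⁿ → ℂ be locally constant with parameter l and |φ(x)| ≤ C'(1 + ‖x‖ₚ^{λ}). Then for every x ∈ ℚₚⁿ, lim_{t→0⁺} ∫_{ℚₚⁿ} K(x−ξ, t) φ(ξ) dⁿξ = φ(x). -/
/-!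
Because `φ` is constant on balls of radius `p ^ l` and `∫ K(·, t) = 1`, the difference
`∫ K(x - ξ, t) φ(ξ) dξ - φ(x) = ∫ K(x - ξ, t) (φ(ξ) - φ(x)) dξ` only involves `‖x - ξ‖ > p ^ l`.
There the kernel bound gives `K(x - ξ, t) ≤ C t ‖x - ξ‖ ^ (-α)`, and the ultrametric inequality
gives `|φ(ξ) - φ(x)| ≲ 1 + ‖x - ξ‖ ^ λ`, so the integrand is at most `t` times a fixed function.
That function is integrable since the ball of radius `p ^ k` is covered by `p ^ (k n)` unit
balls and `α > n + λ`; hence the difference is `O(t)`.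
-/

open MeasureTheory Filter Metric Set Topology

theorem isLocallyConstant_of_forall_norm_le_add_eq {E X : Type*} [SeminormedAddCommGroup E]
    {f : E → X} {r : ℝ} (hr : 0 < r) (hf : ∀ x x' : E, ‖x'‖ ≤ r → f (x + x') = f x) :
    IsLocallyConstant f :=
  (IsLocallyConstant.iff_eventually_eq f).2 fun x ↦ by
    filter_upwards [closedBall_mem_nhds x hr] with y hy
    simpa using hf x (y - x) (mem_closedBall_iff_norm.1 hy)

theorem norm_sub_le_of_norm_le_mul_one_add_rpow {E F : Type*} [SeminormedAddCommGroup E]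
    [IsUltrametricDist E] [SeminormedAddCommGroup F] {f : E → F} {C lam : ℝ} (hC : 0 ≤ C)
    (hlam : 0 ≤ lam) (hf : ∀ x, ‖f x‖ ≤ C * (1 + ‖x‖ ^ lam)) (x ξ : E) :
    ‖f ξ - f x‖ ≤ C * (2 + 2 * ‖x‖ ^ lam + ‖x - ξ‖ ^ lam) := by
  have hξ : ‖ξ‖ ^ lam ≤ ‖x‖ ^ lam + ‖x - ξ‖ ^ lam := by
    have h := IsUltrametricDist.norm_add_le_max x (ξ - x)
    rw [add_sub_cancel, norm_sub_rev, le_max_iff] at h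
    rcases h with h | h
    · exact (Real.rpow_le_rpow (norm_nonneg _) h hlam).trans
        (le_add_of_nonneg_right (by positivity))
    · exact (Real.rpow_le_rpow (norm_nonneg _) h hlam).trans
        (le_add_of_nonneg_left (by positivity))
  have := mul_le_mul_of_nonneg_left hξ hC
  linarith [norm_sub_le (f ξ) (f x), hf ξ, hf x]

theorem tendsto_integral_smul_nhdsGT {X F : Type*} [MeasurableSpace X] [NormedAddCommGroup F]
    [NormedSpace ℝ F] [CompleteSpace F] {μ : Measure X} {T : ℝ} (hT : 0 < T) {k : X → ℝ → ℝ}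
    {g : X → F} {c : F} {D : X → ℝ} (hk : ∀ t ∈ Ioc 0 T, ∫ ξ, k ξ t ∂μ = 1)
    (hg : AEStronglyMeasurable g μ) (hD : Integrable D μ)
    (hkg : ∀ t ∈ Ioc 0 T, ∀ ξ, ‖k ξ t • (g ξ - c)‖ ≤ t * D ξ) :
    Tendsto (fun t ↦ ∫ ξ, k ξ t • g ξ ∂μ) (𝓝[>] 0) (𝓝 c) := by
  have hdist : ∀ t ∈ Ioc 0 T, ‖∫ ξ, k ξ t • g ξ ∂μ - c‖ ≤ t * ∫ ξ, D ξ ∂μ := by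
    intro t ht
    have hkt : Integrable (k · t) μ := by
      by_contra h
      simpa [integral_undef h] using hk t ht
    have hkgc : Integrable (fun ξ ↦ k ξ t • (g ξ - c)) μ :=
      (hD.const_mul t).mono' (hkt.aestronglyMeasurable.smul (hg.sub aestronglyMeasurable_const))
        (.of_forall (hkg t ht))
    have hsub : ∫ ξ, k ξ t • g ξ ∂μ - c = ∫ ξ, k ξ t • (g ξ - c) ∂μ := by
      have := integral_add hkgc (hkt.smul_const c)
      simp only [← smul_add, sub_add_cancel, integral_smul_const, hk t ht, one_smul] at this
      rw [this, add_sub_cancel_right]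
    rw [hsub, ← integral_const_mul]
    exact norm_integral_le_of_norm_le (hD.const_mul t) (.of_forall (hkg t ht))
  rw [← tendsto_sub_nhds_zero_iff]
  refine squeeze_zero_norm' (a := fun t ↦ t * ∫ ξ, D ξ ∂μ) ?_ (tendsto_nhdsWithin_of_tendsto_nhds
    (by simpa using (continuous_mul_const (∫ ξ, D ξ ∂μ)).tendsto 0))
  filter_upwards [Ioo_mem_nhdsGT hT] with t ht
  exact hdist t (Ioo_subset_Ioc_self ht)

theorem norm_smul_sub_le_indicator {E F : Type*} [SeminormedAddCommGroup E] [IsUltrametricDist E]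
    [SeminormedAddCommGroup F] [NormedSpace ℝ F] {φ : E → F} {x ξ : E} {k t r α lam C C' : ℝ}
    (hC' : 0 ≤ C') (hlam : 0 ≤ lam) (hk0 : 0 ≤ k) (hk : r < ‖x - ξ‖ → k ≤ C * t * ‖x - ξ‖ ^ (-α))
    (hφloc : ‖x - ξ‖ ≤ r → φ ξ = φ x) (hφgrow : ∀ y, ‖φ y‖ ≤ C' * (1 + ‖y‖ ^ lam)) :
    ‖k • (φ ξ - φ x)‖ ≤ t * (C * C' * {y | r < ‖y‖}.indicator
      (fun y ↦ ‖y‖ ^ (-α) * (2 + 2 * ‖x‖ ^ lam + ‖y‖ ^ lam)) (x - ξ)) := by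
  rcases le_or_gt ‖x - ξ‖ r with hξ | hξ
  · rw [hφloc hξ, sub_self, smul_zero, norm_zero,
      indicator_of_notMem (s := {y : E | r < ‖y‖}) (not_lt.2 hξ), mul_zero, mul_zero]
  · rw [indicator_of_mem (show x - ξ ∈ {y | r < ‖y‖} from hξ), norm_smul, Real.norm_of_nonneg hk0]
    calc k * ‖φ ξ - φ x‖
        ≤ (C * t * ‖x - ξ‖ ^ (-α)) * (C' * (2 + 2 * ‖x‖ ^ lam + ‖x - ξ‖ ^ lam)) :=
          mul_le_mul (hk hξ) (norm_sub_le_of_norm_le_mul_one_add_rpow hC' hlam hφgrow x ξ)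
            (norm_nonneg _) (hk0.trans (hk hξ))
      _ = _ := by ring

section Annulus

variable {E : Type*} [NormedAddCommGroup E] [ProperSpace E] [MeasurableSpace E]
  (μ : Measure E) [IsFiniteMeasureOnCompacts μ] {ρ : ℝ}

theorem integrableOn_norm_rpow_closedBall_diff_ball [BorelSpace E] (hρ : 0 < ρ) (R β : ℝ) :
    IntegrableOn (fun y : E ↦ ‖y‖ ^ (-β)) (closedBall 0 R \ ball 0 ρ) μ :=
  (continuous_norm.continuousOn.rpow_const fun _ hy ↦ Or.inl <| ne_of_gt <|
      hρ.trans_le (not_lt.1 (mt mem_ball_zero_iff.2 hy.2))).integrableOn_compact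
    ((isCompact_closedBall 0 R).diff isOpen_ball)

theorem integral_norm_rpow_closedBall_diff_ball_le (hρ : 0 < ρ) (R : ℝ) {β : ℝ} (hβ : 0 ≤ β) :
    ∫ y in closedBall 0 R \ ball 0 ρ, ‖‖y‖ ^ (-β)‖ ∂μ ≤ ρ ^ (-β) * μ.real (closedBall 0 R) := by
  have hbound : ∀ y ∈ closedBall (0 : E) R \ ball 0 ρ, ‖‖‖y‖ ^ (-β)‖‖ ≤ ρ ^ (-β) := by
    intro y hy
    have hρy : ρ ≤ ‖y‖ := not_lt.1 (mt mem_ball_zero_iff.2 hy.2)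
    rw [norm_norm, Real.norm_of_nonneg (by positivity)]
    exact Real.rpow_le_rpow_of_nonpos hρ hρy (neg_nonpos.2 hβ)
  calc _ ≤ ρ ^ (-β) * μ.real (closedBall 0 R \ ball 0 ρ) :=
        (Real.le_norm_self _).trans <| norm_setIntegral_le_of_norm_le_const
          ((measure_mono sdiff_subset).trans_lt (isCompact_closedBall 0 R).measure_lt_top) hbound
    _ ≤ _ := by
        gcongr
        · exact (isCompact_closedBall 0 R).measure_lt_top.ne
        · exact sdiff_subset

end Annulus

theorem Padic.exists_lt_pow_norm_sub_div_le_one {p : ℕ} [Fact p.Prime] (k : ℕ) {z : ℚ_[p]}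
    (hz : ‖z‖ ≤ (p : ℝ) ^ k) : ∃ j < p ^ k, ‖z - j / (p : ℚ_[p]) ^ k‖ ≤ 1 := by
  have hp : (p : ℝ) ^ k ≠ 0 := pow_ne_zero _ (by exact_mod_cast (Fact.out : p.Prime).ne_zero)
  have hu : ‖z * (p : ℚ_[p]) ^ k‖ ≤ 1 := by
    rw [norm_mul, norm_pow, Padic.norm_p, inv_pow, ← div_eq_mul_inv]
    exact div_le_one_of_le₀ hz (by positivity)
  set u : ℤ_[p] := ⟨z * (p : ℚ_[p]) ^ k, hu⟩
  refine ⟨u.appr k, u.appr_lt k, ?_⟩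
  have happr : ‖u - u.appr k‖ ≤ ((p : ℝ) ^ k)⁻¹ := by
    simpa using ((u - u.appr k).norm_le_pow_iff_mem_span_pow k).2 (u.appr_spec k)
  have hpQ : (p : ℚ_[p]) ^ k ≠ 0 := by exact_mod_cast hp
  rw [show z - (u.appr k : ℚ_[p]) / (p : ℚ_[p]) ^ k
      = ((u - u.appr k : ℤ_[p]) : ℚ_[p]) / (p : ℚ_[p]) ^ k by
        rw [PadicInt.coe_sub, sub_div, show (u : ℚ_[p]) = z * (p : ℚ_[p]) ^ k from rfl,
          mul_div_cancel_right₀ z hpQ, PadicInt.coe_natCast],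
    norm_div, PadicInt.padic_norm_e_of_padicInt, norm_pow, Padic.norm_p, inv_pow, div_inv_eq_mul]
  calc _ ≤ ((p : ℝ) ^ k)⁻¹ * (p : ℝ) ^ k := by gcongr
    _ = 1 := inv_mul_cancel₀ hp

section Padic

variable {p : ℕ} [Fact p.Prime] {ι : Type*} [Fintype ι]

theorem Padic.closedBall_pow_subset_iUnion (k : ℕ) :
    closedBall (0 : ι → ℚ_[p]) ((p : ℝ) ^ k) ⊆
      ⋃ j : ι → Fin (p ^ k), closedBall (fun i ↦ (j i : ℚ_[p]) / (p : ℚ_[p]) ^ k) 1 := by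
  intro z hz
  rw [mem_closedBall_zero_iff] at hz
  choose j hj hzj using fun i ↦
    Padic.exists_lt_pow_norm_sub_div_le_one k ((norm_le_pi_norm z i).trans hz)
  refine mem_iUnion.2 ⟨fun i ↦ ⟨j i, hj i⟩, ?_⟩
  rw [mem_closedBall, dist_eq_norm, pi_norm_le_iff_of_nonneg zero_le_one]
  exact hzj

variable [MeasurableSpace (ι → ℚ_[p])] [BorelSpace (ι → ℚ_[p])]
  (μ : Measure (ι → ℚ_[p])) [μ.IsAddHaarMeasure]

theorem Padic.addHaar_closedBall_pow_le (k : ℕ) :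
    μ (closedBall 0 ((p : ℝ) ^ k)) ≤ ((p : ENNReal) ^ k) ^ Fintype.card ι * μ (closedBall 0 1) := by
  classical
  calc _ ≤ ∑ j : ι → Fin (p ^ k), μ (closedBall (fun i ↦ (j i : ℚ_[p]) / (p : ℚ_[p]) ^ k) 1) :=
        (measure_mono (closedBall_pow_subset_iUnion k)).trans (measure_iUnion_fintype_le μ _)
    _ = _ := by simp [Measure.addHaar_closedBall_center]

theorem Padic.integrableOn_norm_rpow_neg {r β : ℝ} (hr : 0 < r) (hβ : Fintype.card ι < β) :
    IntegrableOn (fun y : ι → ℚ_[p] ↦ ‖y‖ ^ (-β)) {y | r < ‖y‖} μ := by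
  have hp : (1 : ℝ) < p := by exact_mod_cast (Fact.out : p.Prime).one_lt
  have hp0 : (0 : ℝ) < p := zero_lt_one.trans hp
  set d := Fintype.card ι
  set A : ℕ → Set (ι → ℚ_[p]) := fun k ↦ closedBall 0 ((p : ℝ) ^ (k + 1)) \ ball 0 ((p : ℝ) ^ k)
  have hcover : {y | r < ‖y‖} ⊆ (closedBall 0 1 \ ball 0 r) ∪ ⋃ k, A k := by
    intro y (hy : r < ‖y‖)
    rcases le_or_gt ‖y‖ 1 with hy1 | hy1
    · exact Or.inl ⟨mem_closedBall_zero_iff.2 hy1, by simpa using hy.le⟩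
    · obtain ⟨k, hk, hk'⟩ := exists_nat_pow_near hy1.le hp
      exact Or.inr <| mem_iUnion.2 ⟨k, mem_closedBall_zero_iff.2 hk'.le, by simpa using hk⟩
  have hshell : ∀ k : ℕ, ∫ y in A k, ‖‖y‖ ^ (-β)‖ ∂μ
      ≤ (p : ℝ) ^ d * μ.real (closedBall 0 1) * ((p : ℝ) ^ ((d : ℝ) - β)) ^ k := by
    intro k
    have hball : μ.real (closedBall 0 ((p : ℝ) ^ (k + 1)))
        ≤ ((p : ℝ) ^ (k + 1)) ^ d * μ.real (closedBall 0 1) := by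
      simpa [measureReal_def, ENNReal.toReal_mul] using ENNReal.toReal_mono
        (ENNReal.mul_ne_top (by simp) (isCompact_closedBall 0 1).measure_lt_top.ne)
        (addHaar_closedBall_pow_le μ (k + 1))
    calc _ ≤ ((p : ℝ) ^ k) ^ (-β) * μ.real (closedBall 0 ((p : ℝ) ^ (k + 1))) :=
          integral_norm_rpow_closedBall_diff_ball_le μ (pow_pos hp0 k) _
            ((Nat.cast_nonneg d).trans hβ.le)
      _ ≤ ((p : ℝ) ^ k) ^ (-β) * (((p : ℝ) ^ (k + 1)) ^ d * μ.real (closedBall 0 1)) := by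
          gcongr
      _ = _ := by
          rw [← Real.rpow_pow_comm hp0.le, Real.rpow_sub hp0, Real.rpow_natCast,
            Real.rpow_neg hp0.le, div_pow, inv_pow]
          ring
  have htail : IntegrableOn (fun y : ι → ℚ_[p] ↦ ‖y‖ ^ (-β)) (⋃ k, A k) μ := by
    refine integrableOn_iUnion_of_summable_integral_norm
      (fun k ↦ integrableOn_norm_rpow_closedBall_diff_ball μ (pow_pos hp0 k) _ _) ?_
    refine .of_nonneg_of_le (fun k ↦ integral_nonneg fun _ ↦ norm_nonneg _) hshell
      ((summable_geometric_of_lt_one (by positivity) ?_).mul_left _)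
    exact Real.rpow_lt_one_of_one_lt_of_neg hp (by linarith)
  exact ((integrableOn_norm_rpow_closedBall_diff_ball μ hr 1 β).union htail).mono_set hcover

theorem Padic.integrable_indicator_norm_rpow_mul {r α lam : ℝ} (hr : 0 < r)
    (hα : Fintype.card ι < α) (hαlam : Fintype.card ι < α - lam) (c : ℝ) :
    Integrable ({y | r < ‖y‖}.indicator fun y : ι → ℚ_[p] ↦ ‖y‖ ^ (-α) * (c + ‖y‖ ^ lam)) μ := by
  have hS : MeasurableSet {y : ι → ℚ_[p] | r < ‖y‖} :=
    measurableSet_lt measurable_const measurable_norm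
  have h : IntegrableOn (fun y : ι → ℚ_[p] ↦ c * ‖y‖ ^ (-α) + ‖y‖ ^ (-(α - lam)))
      {y | r < ‖y‖} μ :=
    ((integrableOn_norm_rpow_neg μ hr hα).const_mul c).add (integrableOn_norm_rpow_neg μ hr hαlam)
  refine (integrable_indicator_iff hS).2 (h.congr_fun (fun y (hy : r < ‖y‖) ↦ ?_) hS)
  rw [mul_add, ← Real.rpow_add (hr.trans hy)]
  ring_nf

end Padic

theorem stmt13_general {p : ℕ} [Fact p.Prime] {n : ℕ}
    [MeasurableSpace (Fin n → ℚ_[p])] [BorelSpace (Fin n → ℚ_[p])]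
    (μ : Measure (Fin n → ℚ_[p])) [μ.IsAddHaarMeasure]
    (T α lam C C' : ℝ) (hT : 0 < T) (hlam : 0 ≤ lam) (hα : (n : ℝ) + lam < α)
    (hC : 0 < C) (hC' : 0 < C')
    (K : (Fin n → ℚ_[p]) → ℝ → ℝ)
    (hK0 : ∀ (x : Fin n → ℚ_[p]) (t : ℝ), 0 < t → t ≤ T → 0 ≤ K x t)
    (hK1 : ∀ t : ℝ, 0 < t → t ≤ T → (∫ x : Fin n → ℚ_[p], K x t ∂μ) = 1)
    (hKb : ∀ (x : Fin n → ℚ_[p]) (t : ℝ), 0 < t → t ≤ T →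
      K x t ≤ C * t * (t ^ ((1 : ℝ) / (α - n)) + ‖x‖) ^ (-α))
    (φ : (Fin n → ℚ_[p]) → ℂ) (l : ℤ)
    (hφloc : ∀ x x' : Fin n → ℚ_[p], ‖x'‖ ≤ (p : ℝ) ^ l → φ (x + x') = φ x)
    (hφgrow : ∀ x : Fin n → ℚ_[p], ‖φ x‖ ≤ C' * (1 + ‖x‖ ^ lam)) :
    ∀ x : Fin n → ℚ_[p],
      Tendsto (fun t : ℝ => ∫ ξ : Fin n → ℚ_[p], (K (x - ξ) t : ℂ) * φ ξ ∂μ)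
        (nhdsWithin 0 (Set.Ioi 0)) (nhds (φ x)) := by
  intro x
  have hn : (0 : ℝ) ≤ n := n.cast_nonneg
  have hr : 0 < (p : ℝ) ^ l := zpow_pos (by exact_mod_cast (Fact.out : p.Prime).pos) l
  have hK : ∀ t ∈ Ioc 0 T, ∀ y, 0 < ‖y‖ → K y t ≤ C * t * ‖y‖ ^ (-α) := fun t ht y hy ↦
    (hKb y t ht.1 ht.2).trans <| mul_le_mul_of_nonneg_left
      (Real.rpow_le_rpow_of_nonpos hy (le_add_of_nonneg_left (Real.rpow_nonneg ht.1.le _))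
        (by linarith)) (mul_nonneg hC.le ht.1.le)
  simp_rw [← Complex.real_smul]
  refine tendsto_integral_smul_nhdsGT hT (k := fun ξ t ↦ K (x - ξ) t) (fun t ht ↦ ?_)
    (isLocallyConstant_of_forall_norm_le_add_eq hr hφloc).continuous.aestronglyMeasurable
    (((Padic.integrable_indicator_norm_rpow_mul μ hr (by rw [Fintype.card_fin]; linarith)
      (by rw [Fintype.card_fin]; linarith)
      _).comp_sub_left x).const_mul (C * C'))
    fun t ht ξ ↦ norm_smul_sub_le_indicator hC'.le hlam (hK0 _ t ht.1 ht.2)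
      (fun h ↦ hK t ht _ (hr.trans h))
      (fun h ↦ by simpa using hφloc x (ξ - x) (by rwa [norm_sub_rev])) hφgrow
  rw [integral_sub_left_eq_self (K · t) μ x]
  exact hK1 t ht.1 ht.2

/-- p-adic approximate-identity property of heat-kernel-type families. -/
theorem stmt13 {p : ℕ} [Fact p.Prime] {n : ℕ}
    [MeasurableSpace (Fin n → ℚ_[p])] [BorelSpace (Fin n → ℚ_[p])]
    (μ : Measure (Fin n → ℚ_[p])) [μ.IsAddHaarMeasure]
    (hμ : μ (Metric.closedBall 0 1) = 1)
    (T α lam C C' : ℝ) (hT : 0 < T) (hlam : 0 ≤ lam) (hα : (n : ℝ) + lam < α)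
    (hC : 0 < C) (hC' : 0 < C')
    (K : (Fin n → ℚ_[p]) → ℝ → ℝ)
    (hK0 : ∀ (x : Fin n → ℚ_[p]) (t : ℝ), 0 < t → t ≤ T → 0 ≤ K x t)
    (hK1 : ∀ t : ℝ, 0 < t → t ≤ T → (∫ x : Fin n → ℚ_[p], K x t ∂μ) = 1)
    (hKb : ∀ (x : Fin n → ℚ_[p]) (t : ℝ), 0 < t → t ≤ T →
      K x t ≤ C * t * (t ^ ((1 : ℝ) / (α - n)) + ‖x‖) ^ (-α))
    (φ : (Fin n → ℚ_[p]) → ℂ) (l : ℤ)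
    (hφloc : ∀ x x' : Fin n → ℚ_[p], ‖x'‖ ≤ (p : ℝ) ^ l → φ (x + x') = φ x)
    (hφgrow : ∀ x : Fin n → ℚ_[p], ‖φ x‖ ≤ C' * (1 + ‖x‖ ^ lam)) :
    ∀ x : Fin n → ℚ_[p],
      Tendsto (fun t : ℝ => ∫ ξ : Fin n → ℚ_[p], (K (x - ξ) t : ℂ) * φ ξ ∂μ)
        (nhdsWithin 0 (Set.Ioi 0)) (nhds (φ x)) :=
  stmt13_general μ T α lam C C' hT hlam hα hC hC' K hK0 hK1 hKb φ l hφloc hφgrow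
end

section
/- Let x ∈ ℚₚⁿ with ‖x‖ₚ = p^{β}, and let g : ℝ≥0 → ℝ be such that ξ ↦ g(‖ξ‖ₚ) is in L¹(ℚₚⁿ). Then ∫_{ℚₚⁿ} g(‖ξ‖ₚ) χ(x·ξ) dⁿξ = ‖x‖ₚ^{−n} [ (1 − p^{−n}) Σ_{j=0}^{∞} g(p^{−β−j}) p^{−nj} − g(p^{−β+1}) ]. -/
open MeasureTheory

/-- The bilinear pairing `x·ξ = Σᵢ xᵢ ξᵢ` on `ℚₚⁿ`. -/
noncomputable def padicDot {p : ℕ} [Fact p.Prime] {n : ℕ} (x ξ : Fin n → ℚ_[p]) : ℚ_[p] :=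
  ∑ i, x i * ξ i

/-!
The ball `‖ξ‖ ≤ p^k` of `ℚₚⁿ` is an additive subgroup, the disjoint union of `pⁿ` translates of
the ball of radius `p^(k-1)`, so it has volume `p^(nk)`; and `ξ ↦ χ(x·ξ)` is a character of it,
trivial when `‖x‖ p^k ≤ 1` and nontrivial otherwise, so its integral over the ball is
`p^(nk)` or `0`. A radial function is constant on each sphere `‖ξ‖ = p^k`, the difference of two
consecutive balls, and these spheres exhaust `ℚₚⁿ` up to the null set `{0}`: summing the sphere
contributions gives the formula, in which only the spheres of radius `≤ p^(1-β)` contribute.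
-/

open Metric Filter Topology

namespace AddChar

lemma continuous_of_eventually_eq_one {G M : Type*} [AddGroup G] [TopologicalSpace G]
    [IsTopologicalAddGroup G] [Monoid M] [TopologicalSpace M] (ψ : AddChar G M)
    (h : ∀ᶠ y in 𝓝 0, ψ y = 1) : Continuous ψ := by
  refine continuous_iff_continuousAt.2 fun y ↦
    (continuousAt_const : ContinuousAt (fun _ ↦ ψ y) y).congr ?_
  rw [← map_add_left_nhds_zero y, EventuallyEq, eventually_map]
  filter_upwards [h] with z hz
  rw [map_add_eq_mul, hz, mul_one]

lemma setIntegral_addSubgroup_eq_zero {G : Type*} [AddGroup G] [MeasurableSpace G]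
    [MeasurableAdd G] (μ : Measure G) [μ.IsAddLeftInvariant] (ψ : AddChar G ℂ)
    (H : AddSubgroup G) {h : G} (hh : h ∈ H) (hψ : ψ h ≠ 1) :
    ∫ ξ in (H : Set G), ψ ξ ∂μ = 0 := by
  have hH : (h + ·) ⁻¹' (H : Set G) = H := by
    ext ξ
    simp [H.add_mem_cancel_left hh]
  have key := (measurePreserving_add_left μ h).setIntegral_preimage_emb
    (measurableEmbedding_addLeft h) ψ H
  rw [hH] at key
  simp only [map_add_eq_mul, integral_const_mul] at key
  have : (ψ h - 1) * ∫ ξ in (H : Set G), ψ ξ ∂μ = 0 := by linear_combination key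
  exact (mul_eq_zero.1 this).resolve_left (sub_ne_zero.2 hψ)

end AddChar

lemma hasSum_nat_sub_iff_of_eq_zero {M : Type*} [AddCommMonoid M] [TopologicalSpace M]
    {f : ℤ → M} {m : ℤ} (hf : ∀ k, m < k → f k = 0) {a : M} :
    HasSum (fun j : ℕ ↦ f (m - j)) a ↔ HasSum f a := by
  refine Function.Injective.hasSum_iff (g := fun j : ℕ ↦ m - j) (fun i j h ↦ by simpa using h)
    fun k hk ↦ hf k ?_
  by_contra! hkm
  exact hk ⟨(m - k).toNat, show m - ((m - k).toNat : ℤ) = k by omega⟩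

/-- The value of `∫_{‖ξ‖ ≤ p^k} χ(x·ξ) dξ` when `‖x‖ = p^β`. -/
noncomputable def ballCharIntegral (p n : ℕ) (β k : ℤ) : ℝ :=
  if k + β ≤ 0 then (p : ℝ) ^ ((n : ℤ) * k) else 0

/-- The integral of `ξ ↦ g(‖ξ‖) χ(x·ξ)` over the sphere `‖ξ‖ = p^k` when `‖x‖ = p^β`. -/
noncomputable def shellTerm (g : ℝ → ℝ) (p n : ℕ) (β k : ℤ) : ℝ :=
  g ((p : ℝ) ^ k) * (ballCharIntegral p n β k - ballCharIntegral p n β (k - 1))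

section ShellTerm

variable {p : ℕ} (g : ℝ → ℝ) (n : ℕ) (β : ℤ)

lemma shellTerm_eq_zero {k : ℤ} (hk : 1 - β < k) : shellTerm g p n β k = 0 := by
  simp [shellTerm, ballCharIntegral, show ¬k + β ≤ 0 by omega, show ¬k - 1 + β ≤ 0 by omega]

lemma tsum_shellTerm (hp : p ≠ 0) (hs : Summable fun j : ℕ ↦ shellTerm g p n β (1 - β - j)) :
    ∑' j : ℕ, shellTerm g p n β (1 - β - j) =
      (p : ℝ) ^ (-(n * β)) *
        ((1 - (p : ℝ) ^ (-(n : ℤ))) *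
            ∑' j : ℕ, g ((p : ℝ) ^ (-β - (j : ℤ))) * (p : ℝ) ^ (-((n * j : ℕ) : ℤ)) -
          g ((p : ℝ) ^ (-β + 1))) := by
  have hp0 : (p : ℝ) ≠ 0 := by exact_mod_cast hp
  have hfirst : shellTerm g p n β (1 - β - (0 : ℕ)) =
      -((p : ℝ) ^ (-(n * β)) * g ((p : ℝ) ^ (-β + 1))) := by
    simp only [shellTerm, ballCharIntegral, Nat.cast_zero, sub_zero,
      if_neg (show ¬1 - β + β ≤ 0 by omega), if_pos (show 1 - β - 1 + β ≤ 0 by omega)]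
    ring_nf
  have hrest (j : ℕ) : shellTerm g p n β (1 - β - (j + 1 : ℕ)) =
      (p : ℝ) ^ (-(n * β)) * (1 - (p : ℝ) ^ (-(n : ℤ))) *
        (g ((p : ℝ) ^ (-β - (j : ℤ))) * (p : ℝ) ^ (-((n * j : ℕ) : ℤ))) := by
    simp only [shellTerm, ballCharIntegral, if_pos (show 1 - β - (j + 1 : ℕ) + β ≤ 0 by omega),
      if_pos (show 1 - β - (j + 1 : ℕ) - 1 + β ≤ 0 by omega)]
    rw [show 1 - β - ((j + 1 : ℕ) : ℤ) = -β - j by push_cast; ring]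
    have e1 : (p : ℝ) ^ ((n : ℤ) * (-β - j)) =
        (p : ℝ) ^ (-(n * β)) * (p : ℝ) ^ (-((n * j : ℕ) : ℤ)) := by
      rw [← zpow_add₀ hp0]; congr 1; push_cast; ring
    have e2 : (p : ℝ) ^ ((n : ℤ) * (-β - j - 1)) =
        (p : ℝ) ^ (-(n * β)) * (p : ℝ) ^ (-(n : ℤ)) * (p : ℝ) ^ (-((n * j : ℕ) : ℤ)) := by
      rw [← zpow_add₀ hp0, ← zpow_add₀ hp0]; congr 1; push_cast; ring
    rw [e1, e2]
    ring
  rw [hs.tsum_eq_zero_add, hfirst, tsum_congr hrest, tsum_mul_left]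
  ring

end ShellTerm

section

variable {p : ℕ} [hp : Fact p.Prime]

namespace Padic

lemma exists_norm_sub_natCast_mul_zpow_le {y : ℚ_[p]} {k : ℤ} (hy : ‖y‖ ≤ (p : ℝ) ^ (k + 1)) :
    ∃ d : Fin p, ‖y - d * (p : ℚ_[p]) ^ (-(k + 1))‖ ≤ (p : ℝ) ^ k := by
  have hp0 : (p : ℚ_[p]) ≠ 0 := by exact_mod_cast hp.out.ne_zero
  have hz : ‖y * (p : ℚ_[p]) ^ (k + 1)‖ ≤ 1 := by
    rw [norm_mul, norm_p_zpow, zpow_neg, ← div_eq_mul_inv,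
      div_le_one (zpow_pos (by exact_mod_cast hp.out.pos) _)]
    exact hy
  obtain ⟨d, hdp, hd⟩ := PadicInt.exists_mem_range ⟨_, hz⟩
  refine ⟨⟨d, hdp⟩, ?_⟩
  have hd' : ‖y * (p : ℚ_[p]) ^ (k + 1) - d‖ ≤ (p : ℝ) ^ (-1 : ℤ) := by
    rw [norm_le_pow_iff_norm_lt_pow_add_one, neg_add_cancel, zpow_zero]
    exact PadicInt.mem_nonunits.mp hd
  calc ‖y - d * (p : ℚ_[p]) ^ (-(k + 1))‖
      = ‖(y * (p : ℚ_[p]) ^ (k + 1) - d) * (p : ℚ_[p]) ^ (-(k + 1))‖ := by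
        rw [sub_mul, mul_assoc, ← zpow_add₀ hp0, add_neg_cancel, zpow_zero, mul_one]
    _ ≤ (p : ℝ) ^ (-1 : ℤ) * (p : ℝ) ^ (k + 1) := by
        rw [norm_mul, norm_p_zpow, neg_neg]
        gcongr
    _ = (p : ℝ) ^ k := by rw [← zpow_add₀ (by exact_mod_cast hp.out.ne_zero)]; ring_nf

lemma fin_eq_of_norm_natCast_mul_zpow_sub_le {d d' : Fin p} {k : ℤ}
    (h : ‖(d : ℚ_[p]) * (p : ℚ_[p]) ^ (-(k + 1)) - d' * (p : ℚ_[p]) ^ (-(k + 1))‖ ≤ (p : ℝ) ^ k) :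
    d = d' := by
  have hp1 : (1 : ℝ) < p := by exact_mod_cast hp.out.one_lt
  rw [← sub_mul, norm_mul, norm_p_zpow, neg_neg, ← le_div_iff₀ (by positivity),
    ← zpow_sub₀ (by positivity), show k - (k + 1) = -1 by ring] at h
  have hdvd : (p : ℤ) ∣ (d : ℤ) - d' := by
    rw [← norm_intCast_lt_one_iff]
    push_cast
    exact h.trans_lt (zpow_lt_one_of_neg₀ hp1 (by norm_num))
  have := Int.eq_zero_of_abs_lt_dvd hdvd (by rw [abs_lt]; omega)
  omega

end Padic

section Balls

variable {ι : Type*} [Fintype ι]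

lemma closedBall_zero_zpow_add_one_eq_iUnion (k : ℤ) :
    closedBall (0 : ι → ℚ_[p]) ((p : ℝ) ^ (k + 1)) =
      ⋃ d : ι → Fin p,
        closedBall (fun i ↦ (d i : ℚ_[p]) * (p : ℚ_[p]) ^ (-(k + 1))) ((p : ℝ) ^ k) := by
  have hp1 : (1 : ℝ) < p := by exact_mod_cast hp.out.one_lt
  ext ξ
  simp only [mem_closedBall, dist_eq_norm, Set.mem_iUnion,
    pi_norm_le_iff_of_nonneg (zpow_pos (zero_lt_one.trans hp1) _).le, Pi.sub_apply, sub_zero]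
  constructor
  · intro h
    choose d hd using fun i ↦ Padic.exists_norm_sub_natCast_mul_zpow_le (h i)
    exact ⟨d, hd⟩
  · rintro ⟨d, hd⟩ i
    rw [← sub_add_cancel (ξ i) (d i * (p : ℚ_[p]) ^ (-(k + 1)))]
    refine (IsUltrametricDist.norm_add_le_max _ _).trans
      (max_le ((hd i).trans (zpow_le_zpow_right₀ hp1.le (by omega : k ≤ k + 1))) ?_)
    rw [norm_mul, Padic.norm_p_zpow, neg_neg]
    exact mul_le_of_le_one_left (by positivity) (IsUltrametricDist.norm_natCast_le_one _ _)

lemma pairwise_disjoint_closedBall_natCast_mul_zpow (k : ℤ) :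
    Pairwise (Function.onFun Disjoint fun d : ι → Fin p ↦
      closedBall (fun i ↦ (d i : ℚ_[p]) * (p : ℚ_[p]) ^ (-(k + 1))) ((p : ℝ) ^ k)) := by
  intro d d' hne
  set c : (ι → Fin p) → ι → ℚ_[p] := fun d i ↦ (d i : ℚ_[p]) * (p : ℚ_[p]) ^ (-(k + 1))
  refine Set.disjoint_left.2 fun ξ (h : ξ ∈ closedBall (c d) _) (h' : ξ ∈ closedBall (c d') _) ↦
    hne (funext fun i ↦ Padic.fin_eq_of_norm_natCast_mul_zpow_sub_le (k := k) ?_)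
  rw [mem_closedBall] at h h'
  calc ‖c d i - c d' i‖ ≤ dist (c d) (c d') :=
        dist_eq_norm (c d) (c d') ▸ norm_le_pi_norm (c d - c d') i
    _ ≤ max (dist (c d) ξ) (dist ξ (c d')) := IsUltrametricDist.dist_triangle_max _ _ _
    _ ≤ (p : ℝ) ^ k := max_le (dist_comm ξ (c d) ▸ h) h'

lemma pi_norm_lt_zpow_iff (ξ : ι → ℚ_[p]) (k : ℤ) :
    ‖ξ‖ < (p : ℝ) ^ k ↔ ‖ξ‖ ≤ (p : ℝ) ^ (k - 1) := by
  have hp0 : (0 : ℝ) < p := by exact_mod_cast hp.out.pos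
  rw [pi_norm_lt_iff (zpow_pos hp0 k), pi_norm_le_iff_of_nonneg (zpow_pos hp0 _).le]
  simp only [Padic.norm_lt_pow_iff_norm_le_pow_sub_one]

lemma sphere_zero_zpow_eq_diff (k : ℤ) :
    sphere (0 : ι → ℚ_[p]) ((p : ℝ) ^ k) =
      closedBall 0 ((p : ℝ) ^ k) \ closedBall 0 ((p : ℝ) ^ (k - 1)) := by
  ext ξ
  rw [mem_sphere_zero_iff_norm, Set.mem_sdiff, mem_closedBall_zero_iff, mem_closedBall_zero_iff,
    ← pi_norm_lt_zpow_iff, not_lt, ← le_antisymm_iff, eq_comm]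

lemma exists_pi_norm_eq_zpow {ξ : ι → ℚ_[p]} (hξ : ξ ≠ 0) : ∃ m : ℤ, ‖ξ‖ = (p : ℝ) ^ m := by
  obtain ⟨i, hi⟩ : ∃ i, ‖ξ i‖ = ‖ξ‖ :=
    (@IsGreatest.pi_norm _ _ _ _ (Function.ne_iff.1 hξ).nonempty ξ).1
  have hξi : ξ i ≠ 0 := norm_ne_zero_iff.1 (hi ▸ norm_ne_zero_iff.2 hξ)
  exact ⟨_, hi ▸ Padic.norm_eq_zpow_neg_valuation hξi⟩

lemma iUnion_sphere_zero_zpow : ⋃ k : ℤ, sphere (0 : ι → ℚ_[p]) ((p : ℝ) ^ k) = {0}ᶜ := by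
  have hp0 : (0 : ℝ) < p := by exact_mod_cast hp.out.pos
  ext ξ
  simp only [Set.mem_iUnion, mem_sphere_zero_iff_norm, Set.mem_compl_singleton_iff]
  refine ⟨fun ⟨k, hk⟩ hξ ↦ (zpow_pos hp0 k).ne' (hk ▸ hξ ▸ norm_zero), fun hξ ↦ ?_⟩
  obtain ⟨m, hm⟩ := exists_pi_norm_eq_zpow hξ
  exact ⟨m, hm⟩

lemma pairwise_disjoint_sphere_zero_zpow :
    Pairwise (Function.onFun Disjoint fun k : ℤ ↦ sphere (0 : ι → ℚ_[p]) ((p : ℝ) ^ k)) := by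
  have hp1 : (1 : ℝ) < p := by exact_mod_cast hp.out.one_lt
  intro k l hkl
  refine Set.disjoint_left.2 fun ξ (h : ξ ∈ sphere 0 _) (h' : ξ ∈ sphere 0 _) ↦ hkl ?_
  rw [mem_sphere_zero_iff_norm] at h h'
  exact zpow_right_injective₀ (zero_lt_one.trans hp1) hp1.ne' (h.symm.trans h')

variable [MeasurableSpace (ι → ℚ_[p])] [BorelSpace (ι → ℚ_[p])]

lemma setIntegral_sphere_zero_zpow_radial {μ : Measure (ι → ℚ_[p])} (g : ℝ → ℂ)
    {ψ : (ι → ℚ_[p]) → ℂ} (k : ℤ)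
    (hψ : IntegrableOn ψ (closedBall 0 ((p : ℝ) ^ k)) μ) :
    ∫ ξ in sphere 0 ((p : ℝ) ^ k), g ‖ξ‖ * ψ ξ ∂μ =
      g ((p : ℝ) ^ k) * (∫ ξ in closedBall 0 ((p : ℝ) ^ k), ψ ξ ∂μ -
        ∫ ξ in closedBall 0 ((p : ℝ) ^ (k - 1)), ψ ξ ∂μ) := by
  have hp1 : (1 : ℝ) < p := by exact_mod_cast hp.out.one_lt
  rw [setIntegral_congr_fun isClosed_sphere.measurableSet
      fun ξ hξ ↦ by rw [mem_sphere_zero_iff_norm.1 hξ], integral_const_mul,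
    sphere_zero_zpow_eq_diff, setIntegral_sdiff measurableSet_closedBall hψ
      (closedBall_subset_closedBall (zpow_le_zpow_right₀ hp1.le (by omega)))]

variable (μ : Measure (ι → ℚ_[p])) [μ.IsAddHaarMeasure]

lemma measure_closedBall_zero_zpow_add_one (k : ℤ) :
    μ (closedBall 0 ((p : ℝ) ^ (k + 1))) = p ^ Fintype.card ι * μ (closedBall 0 ((p : ℝ) ^ k)) := by
  rw [closedBall_zero_zpow_add_one_eq_iUnion,
    measure_iUnion (pairwise_disjoint_closedBall_natCast_mul_zpow k)
      fun _ ↦ measurableSet_closedBall]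
  classical
  rw [tsum_fintype]
  simp [Measure.addHaar_closedBall_center]

lemma measureReal_closedBall_zero_zpow (hμ : μ (closedBall 0 1) = 1) (k : ℤ) :
    μ.real (closedBall 0 ((p : ℝ) ^ k)) = (p : ℝ) ^ (Fintype.card ι * k) := by
  have hp0 : (p : ℝ) ≠ 0 := by exact_mod_cast hp.out.ne_zero
  have step (k : ℤ) : μ.real (closedBall 0 ((p : ℝ) ^ (k + 1))) =
      (p : ℝ) ^ Fintype.card ι * μ.real (closedBall 0 ((p : ℝ) ^ k)) := by
    simp [measureReal_def, measure_closedBall_zero_zpow_add_one]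
  induction k using Int.induction_on with
  | zero => simp [measureReal_def, hμ]
  | succ k ih => rw [step, ih, ← zpow_natCast, ← zpow_add₀ hp0]; ring_nf
  | pred k ih =>
    rw [← sub_add_cancel (-(k : ℤ)) 1, step, ← zpow_natCast] at ih
    rw [eq_div_of_mul_eq (zpow_ne_zero _ hp0) ((mul_comm _ _).trans ih), ← zpow_sub₀ hp0]
    ring_nf

lemma hasSum_setIntegral_sphere_zero_zpow [Nonempty ι] {F : (ι → ℚ_[p]) → ℂ}
    (hF : Integrable F μ) :
    HasSum (fun k : ℤ ↦ ∫ ξ in sphere 0 ((p : ℝ) ^ k), F ξ ∂μ) (∫ ξ, F ξ ∂μ) := by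
  -- `0` is not isolated, so the Haar measure `μ` has no atom there
  have := Module.punctured_nhds_neBot ℚ_[p] (ι → ℚ_[p]) 0
  have h := hasSum_integral_iUnion (fun _ ↦ isClosed_sphere.measurableSet)
    pairwise_disjoint_sphere_zero_zpow hF.integrableOn
  rwa [iUnion_sphere_zero_zpow, restrict_compl_singleton] at h

end Balls

variable {n : ℕ}

lemma padicDot_add_right (x ξ η : Fin n → ℚ_[p]) :
    padicDot x (ξ + η) = padicDot x ξ + padicDot x η := by
  simp [padicDot, mul_add, Finset.sum_add_distrib]

lemma norm_padicDot_le (x ξ : Fin n → ℚ_[p]) : ‖padicDot x ξ‖ ≤ ‖x‖ * ‖ξ‖ :=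
  IsUltrametricDist.norm_sum_le_of_forall_le_of_nonneg (by positivity) fun i _ ↦
    (norm_mul _ _).trans_le (mul_le_mul (norm_le_pi_norm x i) (norm_le_pi_norm ξ i)
      (norm_nonneg _) (norm_nonneg _))

lemma padicDot_single (x : Fin n → ℚ_[p]) (i : Fin n) (a : ℚ_[p]) :
    padicDot x (Pi.single i a) = x i * a := by
  simp [padicDot, Pi.single_apply]

lemma continuous_addChar_padicDot (χ : AddChar ℚ_[p] ℂ) (hχ : ∀ y : ℚ_[p], χ y = 1 ↔ ‖y‖ ≤ 1)
    (x : Fin n → ℚ_[p]) : Continuous fun ξ ↦ χ (padicDot x ξ) := by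
  have hχc : Continuous χ := χ.continuous_of_eventually_eq_one <|
    eventually_of_mem (closedBall_mem_nhds 0 one_pos) fun y hy ↦
      (hχ y).2 (mem_closedBall_zero_iff.1 hy)
  exact hχc.comp <| continuous_finsetSum _ fun i _ ↦ continuous_const.mul (continuous_apply i)

lemma setIntegral_closedBall_addChar_padicDot [MeasurableSpace (Fin n → ℚ_[p])]
    [BorelSpace (Fin n → ℚ_[p])] (μ : Measure (Fin n → ℚ_[p])) [μ.IsAddLeftInvariant]
    (χ : AddChar ℚ_[p] ℂ) (hχ : ∀ y : ℚ_[p], χ y = 1 ↔ ‖y‖ ≤ 1) (x : Fin n → ℚ_[p]) (k : ℤ) :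
    ∫ ξ in closedBall 0 ((p : ℝ) ^ k), χ (padicDot x ξ) ∂μ =
      if ‖x‖ * (p : ℝ) ^ k ≤ 1 then (μ.real (closedBall 0 ((p : ℝ) ^ k)) : ℂ) else 0 := by
  have hpk : (0 : ℝ) < (p : ℝ) ^ k := zpow_pos (by exact_mod_cast hp.out.pos) k
  split_ifs with hxk
  · have hone : Set.EqOn (fun ξ ↦ χ (padicDot x ξ)) 1 (closedBall 0 ((p : ℝ) ^ k)) :=
      fun ξ hξ ↦ (hχ _).2 <| (norm_padicDot_le x ξ).trans <|
        (mul_le_mul_of_nonneg_left (mem_closedBall_zero_iff.1 hξ) (norm_nonneg x)).trans hxk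
    rw [setIntegral_congr_fun measurableSet_closedBall hone, Pi.one_def, setIntegral_const,
      Complex.real_smul, mul_one]
  · have hx : x ≠ 0 := by
      rintro rfl
      simp at hxk
    obtain ⟨i, hi⟩ : ∃ i, ‖x i‖ = ‖x‖ :=
      (@IsGreatest.pi_norm _ _ _ _ (Function.ne_iff.1 hx).nonempty x).1
    have hmem : Pi.single i ((p : ℚ_[p]) ^ (-k)) ∈
        IsUltrametricDist.closedBall_openAddSubgroup (Fin n → ℚ_[p]) hpk := by
      change _ ∈ closedBall (0 : Fin n → ℚ_[p]) _
      rw [mem_closedBall_zero_iff, Pi.norm_single, Padic.norm_p_zpow, neg_neg]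
    refine AddChar.setIntegral_addSubgroup_eq_zero μ
      (χ.compAddMonoidHom (AddMonoidHom.mk' (padicDot x) (padicDot_add_right x))) _ hmem ?_
    rw [AddChar.compAddMonoidHom_apply, AddMonoidHom.mk'_apply, padicDot_single, Ne, hχ,
      norm_mul, Padic.norm_p_zpow, neg_neg, hi]
    exact hxk

lemma setIntegral_closedBall_addChar_padicDot_of_norm_eq [MeasurableSpace (Fin n → ℚ_[p])]
    [BorelSpace (Fin n → ℚ_[p])] (μ : Measure (Fin n → ℚ_[p])) [μ.IsAddHaarMeasure]
    (hμ : μ (closedBall 0 1) = 1) (χ : AddChar ℚ_[p] ℂ) (hχ : ∀ y : ℚ_[p], χ y = 1 ↔ ‖y‖ ≤ 1)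
    {x : Fin n → ℚ_[p]} {β : ℤ} (hx : ‖x‖ = (p : ℝ) ^ β) (k : ℤ) :
    ∫ ξ in closedBall 0 ((p : ℝ) ^ k), χ (padicDot x ξ) ∂μ = ballCharIntegral p n β k := by
  have hp1 : (1 : ℝ) < p := by exact_mod_cast hp.out.one_lt
  have hcond : ‖x‖ * (p : ℝ) ^ k ≤ 1 ↔ k + β ≤ 0 := by
    rw [hx, ← zpow_add₀ (zero_lt_one.trans hp1).ne', zpow_le_one_iff_right₀ hp1, add_comm]
  rw [setIntegral_closedBall_addChar_padicDot μ χ hχ, measureReal_closedBall_zero_zpow μ hμ,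
    Fintype.card_fin, ballCharIntegral]
  simp only [hcond]
  split_ifs <;> simp

lemma setIntegral_sphere_radial_mul_addChar_padicDot [MeasurableSpace (Fin n → ℚ_[p])]
    [BorelSpace (Fin n → ℚ_[p])] (μ : Measure (Fin n → ℚ_[p])) [μ.IsAddHaarMeasure]
    (hμ : μ (closedBall 0 1) = 1) (χ : AddChar ℚ_[p] ℂ) (hχ : ∀ y : ℚ_[p], χ y = 1 ↔ ‖y‖ ≤ 1)
    (g : ℝ → ℝ) {x : Fin n → ℚ_[p]} {β : ℤ} (hx : ‖x‖ = (p : ℝ) ^ β) (k : ℤ) :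
    ∫ ξ in sphere 0 ((p : ℝ) ^ k), (g ‖ξ‖ : ℂ) * χ (padicDot x ξ) ∂μ = shellTerm g p n β k := by
  rw [setIntegral_sphere_zero_zpow_radial (fun r ↦ (g r : ℂ)) k
      ((continuous_addChar_padicDot χ hχ x).continuousOn.integrableOn_compact
        (isCompact_closedBall _ _)),
    setIntegral_closedBall_addChar_padicDot_of_norm_eq μ hμ χ hχ hx,
    setIntegral_closedBall_addChar_padicDot_of_norm_eq μ hμ χ hχ hx, shellTerm]
  push_cast
  rfl

end

/-- the Fourier transform of a radial integrable function on `ℚₚⁿ`. -/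
theorem stmt16 {p : ℕ} [Fact p.Prime] {n : ℕ}
    [MeasurableSpace (Fin n → ℚ_[p])] [BorelSpace (Fin n → ℚ_[p])]
    (μ : Measure (Fin n → ℚ_[p])) [μ.IsAddHaarMeasure]
    (hμ : μ (Metric.closedBall 0 1) = 1)
    (χ : AddChar ℚ_[p] ℂ)
    (hχ : ∀ y : ℚ_[p], χ y = 1 ↔ ‖y‖ ≤ 1)
    (hχu : ∀ y : ℚ_[p], ‖χ y‖ = 1)
    (g : ℝ → ℝ)
    (hg : Integrable (fun ξ : Fin n → ℚ_[p] => g ‖ξ‖) μ)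
    (x : Fin n → ℚ_[p]) (β : ℤ) (hx : ‖x‖ = (p : ℝ) ^ β) :
    (∫ ξ : Fin n → ℚ_[p], (g ‖ξ‖ : ℂ) * χ (padicDot x ξ) ∂μ) =
      ((‖x‖ ^ (-(n : ℝ)) *
        ((1 - (p : ℝ) ^ (-(n : ℤ))) *
            ∑' j : ℕ, g ((p : ℝ) ^ (-β - (j : ℤ))) * (p : ℝ) ^ (-((n * j : ℕ) : ℤ)) -
          g ((p : ℝ) ^ (-β + 1))) : ℝ) : ℂ) := by
  have hp0 : (0 : ℝ) < p := by exact_mod_cast (Fact.out : p.Prime).pos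
  have : Nonempty (Fin n) := (Function.ne_iff.1 (norm_pos_iff.1 (hx ▸ zpow_pos hp0 β))).nonempty
  have hF : Integrable (fun ξ ↦ (g ‖ξ‖ : ℂ) * χ (padicDot x ξ)) μ :=
    (hg.ofReal (𝕜 := ℂ)).mul_bdd (continuous_addChar_padicDot χ hχ x).aestronglyMeasurable
      (Eventually.of_forall fun ξ ↦ (hχu _).le)
  have hsum : HasSum (fun k : ℤ ↦ (shellTerm g p n β k : ℂ))
      (∫ ξ, (g ‖ξ‖ : ℂ) * χ (padicDot x ξ) ∂μ) := by
    simpa only [setIntegral_sphere_radial_mul_addChar_padicDot μ hμ χ hχ g hx]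
      using hasSum_setIntegral_sphere_zero_zpow μ hF
  replace hsum := (hasSum_nat_sub_iff_of_eq_zero (m := 1 - β) fun k hk ↦ by
    rw [shellTerm_eq_zero g n β hk, Complex.ofReal_zero]).2 hsum
  have hxn : ‖x‖ ^ (-(n : ℝ)) = (p : ℝ) ^ (-(n * β)) := by
    rw [hx, Real.rpow_neg (zpow_nonneg hp0.le β), Real.rpow_natCast, ← zpow_natCast, ← zpow_mul,
      ← zpow_neg, mul_comm]
  rw [← hsum.tsum_eq, ← Complex.ofReal_tsum, hxn,
    tsum_shellTerm g n β (Fact.out : p.Prime).ne_zero (Complex.summable_ofReal.1 hsum.summable)]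
end
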